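/- arXiv:2603.09263 — 2 statements merged into one kernel-verified Lean document; each statement's English description precedes it below -/
import Mathlib

section
/- Let s, ε, δ > 0 with ε² ≥ 4δs, and let h : [-s, s] → ℝ be continuous with h(±s) = 0, h < 0 on (-s,s), C¹ on [-s, s] with h'(a) = (1/δ)[ε - (a² - s²)/(2h(a))] on (-s,s), h'(-s) = (ε - √(ε² + 4δs))/(2δ), and h'(s) = (ε - √(ε² - 4δs))/(2δ). Then for λ̄ = √2 - 1 and λ̲ = 1, with p_λ(a) = (λ/ε)(a - s)(a + s): p_{λ̲}(a) ≤ h(a) ≤ p_{λ̄}(a) for all a ∈ (-s, s). -/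
open Set

lemma aux_nonneg {G : ℝ → ℝ} {c d : ℝ}
    (hc : ContinuousOn G (Icc c d)) (h0 : 0 ≤ G c)
    (hder : ∀ x ∈ Ioo c d, G x < 0 → ∃ y, HasDerivAt G y x ∧ 0 < y) :
    ∀ x ∈ Icc c d, 0 ≤ G x := by
  by_contra hcon
  push_neg at hcon
  obtain ⟨x, hx, hGx⟩ := hcon
  have hcx : c ≤ x := hx.1
  set S := {a ∈ Icc c x | 0 ≤ G a} with hS
  have hScl : IsClosed S := by
    have : S = Icc c x ∩ G ⁻¹' (Ici 0) := by
      ext a; simp [hS, Set.mem_sep_iff, and_comm]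
    rw [this]
    exact ContinuousOn.preimage_isClosed_of_isClosed
      (hc.mono (Icc_subset_Icc le_rfl hx.2)) isClosed_Icc isClosed_Ici
  have hScomp : IsCompact S :=
    (isCompact_Icc : IsCompact (Icc c x)).of_isClosed_subset hScl (sep_subset _ _)
  have hSne : S.Nonempty := ⟨c, ⟨left_mem_Icc.2 hcx, h0⟩⟩
  set a₁ := sSup S with ha₁def
  have ha₁ : a₁ ∈ S := hScomp.sSup_mem hSne
  have ha₁x : a₁ ≤ x := ha₁.1.2
  have ha₁ne : a₁ ≠ x := fun hEq => by rw [hEq] at ha₁; linarith [ha₁.2]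
  have ha₁lt : a₁ < x := lt_of_le_of_ne ha₁x ha₁ne
  have hGneg : ∀ a ∈ Ioc a₁ x, G a < 0 := by
    intro a ha
    by_contra hga
    push_neg at hga
    have : a ∈ S := ⟨⟨le_trans ha₁.1.1 ha.1.le, ha.2⟩, hga⟩
    have := le_csSup hScomp.bddAbove this
    linarith [ha.1]
  have hmono : StrictMonoOn G (Icc a₁ x) := by
    apply strictMonoOn_of_deriv_pos (convex_Icc a₁ x)
      (hc.mono (Icc_subset_Icc ha₁.1.1 hx.2))
    intro a ha
    rw [interior_Icc] at ha
    have haIoo : a ∈ Ioo c d := ⟨lt_of_le_of_lt ha₁.1.1 ha.1, lt_of_lt_of_le ha.2 hx.2⟩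
    obtain ⟨y, hy, hypos⟩ := hder a haIoo (hGneg a ⟨ha.1, ha.2.le⟩)
    rw [hy.deriv]; exact hypos
  have := hmono (left_mem_Icc.2 ha₁x) (right_mem_Icc.2 ha₁x) ha₁lt
  linarith [ha₁.2]

set_option maxHeartbeats 1000000 in
/-- Key comparison lemma: the parametrized shock derivative lies between two parabolas. -/
theorem parabola_comparison (s ε δ : ℝ) (hs : 0 < s) (hε : 0 < ε) (hδ : 0 < δ)
    (hcond : 4 * δ * s ≤ ε ^ 2) (h h' : ℝ → ℝ)
    (hcont : ContinuousOn h (Icc (-s) s))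
    (hm : h (-s) = 0) (hp : h s = 0)
    (hneg : ∀ a ∈ Ioo (-s) s, h a < 0)
    (hderiv : ∀ a ∈ Icc (-s) s, HasDerivWithinAt h (h' a) (Icc (-s) s) a)
    (hcont' : ContinuousOn h' (Icc (-s) s))
    (hode : ∀ a ∈ Ioo (-s) s, h' a = (1 / δ) * (ε - (a ^ 2 - s ^ 2) / (2 * h a)))
    (hm' : h' (-s) = (ε - Real.sqrt (ε ^ 2 + 4 * δ * s)) / (2 * δ))
    (hp' : h' s = (ε - Real.sqrt (ε ^ 2 - 4 * δ * s)) / (2 * δ)) :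
    ∀ a ∈ Ioo (-s) s,
      (1 / ε) * (a - s) * (a + s) ≤ h a ∧
      h a ≤ ((Real.sqrt 2 - 1) / ε) * (a - s) * (a + s) := by
  intro a ha
  have hsqrt2 : (Real.sqrt 2) ^ 2 = 2 := Real.sq_sqrt (by norm_num)
  have hsqrt2_gt : (1 : ℝ) < Real.sqrt 2 := by
    nlinarith [Real.sqrt_nonneg 2]
  set L : ℝ := Real.sqrt 2 - 1 with hL
  have hLpos : 0 < L := by linarith
  have hLsq : L ^ 2 + 2 * L - 1 = 0 := by
    simp only [hL]; nlinarith
  -- common facts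
  have hderivAt : ∀ x ∈ Ioo (-s) s, HasDerivAt h (h' x) x := fun x hx =>
    (hderiv x (Ioo_subset_Icc_self hx)).hasDerivAt (Icc_mem_nhds hx.1 hx.2)
  have e2 : 2 * s / ε ≤ ε / (2 * δ) := by
    rw [div_le_div_iff₀ hε (by positivity)]
    nlinarith
  constructor
  · -- lower bound: F := h - p₁ ≥ 0
    set F : ℝ → ℝ := fun t => h t - (1 / ε) * (t - s) * (t + s) with hF
    have hFcont : ContinuousOn F (Icc (-s) s) :=
      hcont.sub (Continuous.continuousOn (by fun_prop))
    have hF0 : 0 ≤ F (-s) := by simp [hF, hm]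
    have key := aux_nonneg (d := s) hFcont hF0 ?_ a (Ioo_subset_Icc_self ha)
    · simpa [hF] using key
    · intro x hx hFx
      have hxN : x ^ 2 - s ^ 2 < 0 := by nlinarith [hx.1, hx.2]
      have hhx : h x < 0 := hneg x hx
      have hhxlt : h x < (1 / ε) * (x - s) * (x + s) := by
        simp only [hF] at hFx; linarith
      have hhxlt' : ε * h x < x ^ 2 - s ^ 2 := by
        rw [show (1 / ε) * (x - s) * (x + s) = (x ^ 2 - s ^ 2) / ε by ring,
          lt_div_iff₀ hε] at hhxlt
        linarith
      have hratio : (x ^ 2 - s ^ 2) / (2 * h x) < ε / 2 := by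
        rw [div_lt_iff_of_neg (by linarith : 2 * h x < 0)]
        nlinarith [hhxlt']
      have hp' : HasDerivAt (fun t => (1 / ε) * (t - s) * (t + s)) ((1 / ε) * (2 * x)) x := by
        have := (((hasDerivAt_id x).sub_const s).const_mul (1 / ε)).mul
          ((hasDerivAt_id x).add_const s)
        convert this using 1
        · rfl
        · rfl
        · funext t; simp [mul_assoc]
        · simp; ring
      refine ⟨h' x - (1 / ε) * (2 * x), (hderivAt x hx).sub hp', ?_⟩
      rw [hode x hx]
      set R := (x ^ 2 - s ^ 2) / (2 * h x) with hR
      have h1 : ε / 2 ≤ ε - R := by linarith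
      have h2 : (1 / δ) * (ε / 2) ≤ (1 / δ) * (ε - R) :=
        mul_le_mul_of_nonneg_left h1 (by positivity)
      have h3 : (1 / δ) * (ε / 2) = ε / (2 * δ) := by ring
      have h4 : (1 / ε) * (2 * x) < 2 * s / ε := by
        have h4' : 2 * x / ε < 2 * s / ε := by gcongr; linarith [hx.2]
        linarith [h4', show (1 / ε) * (2 * x) = 2 * x / ε from by ring]
      linarith
  · -- upper bound: G := p_L - h ≥ 0
    set G : ℝ → ℝ := fun t => (L / ε) * (t - s) * (t + s) - h t with hG
    have hGcont : ContinuousOn G (Icc (-s) s) :=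
      (Continuous.continuousOn (by fun_prop)).sub hcont
    have hG0 : 0 ≤ G (-s) := by simp [hG, hm]
    have key := aux_nonneg (d := s) hGcont hG0 ?_ a (Ioo_subset_Icc_self ha)
    · simp only [hG, hL] at key ⊢; linarith
    · intro x hx hGx
      have hxN : x ^ 2 - s ^ 2 < 0 := by nlinarith [hx.1, hx.2]
      have hhx : h x < 0 := hneg x hx
      have hhxgt : (L / ε) * (x - s) * (x + s) < h x := by
        simp only [hG] at hGx; linarith
      have hhxgt' : L * (x ^ 2 - s ^ 2) < h x * ε := by
        rw [show (L / ε) * (x - s) * (x + s) = L * (x ^ 2 - s ^ 2) / ε by ring,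
          div_lt_iff₀ hε] at hhxgt
        linarith
      have hratio : ε / (2 * L) < (x ^ 2 - s ^ 2) / (2 * h x) := by
        rw [lt_div_iff_of_neg (by linarith : 2 * h x < 0), div_mul_eq_mul_div,
          lt_div_iff₀ (by positivity : (0:ℝ) < 2 * L)]
        nlinarith [hhxgt']
      have hp' : HasDerivAt (fun t => (L / ε) * (t - s) * (t + s)) ((L / ε) * (2 * x)) x := by
        have := (((hasDerivAt_id x).sub_const s).const_mul (L / ε)).mul
          ((hasDerivAt_id x).add_const s)
        convert this using 1
        · rfl
        · rfl
        · funext t; simp [mul_assoc]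
        · simp; ring
      refine ⟨(L / ε) * (2 * x) - h' x, hp'.sub (hderivAt x hx), ?_⟩
      rw [hode x hx]
      set R := (x ^ 2 - s ^ 2) / (2 * h x) with hR
      have e0 : ε - ε / (2 * L) = -(L * ε) / 2 := by
        field_simp
        linear_combination hLsq
      have h1 : ε - R < -(L * ε) / 2 := by linarith [hratio, e0]
      have h2 : (1 / δ) * (ε - R) < (1 / δ) * (-(L * ε) / 2) :=
        mul_lt_mul_of_pos_left h1 (by positivity)
      have h3 : (1 / δ) * (-(L * ε) / 2) = -(L * (ε / (2 * δ))) := by ring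
      have h4 : (L / ε) * (2 * (-s)) < (L / ε) * (2 * x) :=
        mul_lt_mul_of_pos_left (by linarith [hx.1]) (by positivity)
      have h5 : L * (2 * s / ε) ≤ L * (ε / (2 * δ)) :=
        mul_le_mul_of_nonneg_left e2 hLpos.le
      have h6 : (L / ε) * (2 * (-s)) = -(L * (2 * s / ε)) := by ring
      linarith
end

section
/- Let s, ε > 0 and let ũ : ℝ → ℝ be a strictly decreasing C¹ function with ũ(±∞) = ∓s satisfying (√2-1)(s - ũ)(ũ + s) ≤ -ε ũ' ≤ (s - ũ)(ũ + s) on ℝ and ũ(0) = 0. Then for all x ∈ ℝ: ((√2-1)s²/ε)·exp(-2s|x|/ε) ≤ -ũ'(x) ≤ (2s²/ε)·exp(-(√2-1)s|x|/ε). -/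
open Filter Topology

private lemma SDE_mono_Ici (f : ℝ → ℝ) (hf : Differentiable ℝ f)
    (h : ∀ t, 0 < t → 0 ≤ deriv f t) {x : ℝ} (hx : 0 ≤ x) : f 0 ≤ f x :=
  (monotoneOn_of_deriv_nonneg (convex_Ici 0) hf.continuous.continuousOn
    (fun t _ => (hf t).differentiableWithinAt)
    (fun t ht => h t (by simpa [interior_Ici] using ht)))
    Set.self_mem_Ici (Set.mem_Ici.2 hx) hx

private lemma SDE_anti_Ici (f : ℝ → ℝ) (hf : Differentiable ℝ f)
    (h : ∀ t, 0 < t → deriv f t ≤ 0) {x : ℝ} (hx : 0 ≤ x) : f x ≤ f 0 :=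
  (antitoneOn_of_deriv_nonpos (convex_Ici 0) hf.continuous.continuousOn
    (fun t _ => (hf t).differentiableWithinAt)
    (fun t ht => h t (by simpa [interior_Ici] using ht)))
    Set.self_mem_Ici (Set.mem_Ici.2 hx) hx

private lemma SDE_mono_Iic (f : ℝ → ℝ) (hf : Differentiable ℝ f)
    (h : ∀ t, t < 0 → 0 ≤ deriv f t) {x : ℝ} (hx : x ≤ 0) : f x ≤ f 0 :=
  (monotoneOn_of_deriv_nonneg (convex_Iic 0) hf.continuous.continuousOn
    (fun t _ => (hf t).differentiableWithinAt)
    (fun t ht => h t (by simpa [interior_Iic] using ht)))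
    (Set.mem_Iic.2 hx) Set.self_mem_Iic hx

private lemma SDE_anti_Iic (f : ℝ → ℝ) (hf : Differentiable ℝ f)
    (h : ∀ t, t < 0 → deriv f t ≤ 0) {x : ℝ} (hx : x ≤ 0) : f 0 ≤ f x :=
  (antitoneOn_of_deriv_nonpos (convex_Iic 0) hf.continuous.continuousOn
    (fun t _ => (hf t).differentiableWithinAt)
    (fun t ht => h t (by simpa [interior_Iic] using ht)))
    (Set.mem_Iic.2 hx) Set.self_mem_Iic hx

private lemma SDE_deriv_mul_exp (v : ℝ → ℝ) (hv : Differentiable ℝ v) (k t : ℝ) :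
    deriv (fun t => v t * Real.exp (k * t)) t
      = (deriv v t + k * v t) * Real.exp (k * t) := by
  have h1 : HasDerivAt (fun x : ℝ => Real.exp (k * x)) (Real.exp (k * t) * k) t := by
    simpa using ((hasDerivAt_id t).const_mul k).exp
  have h2 := ((hv t).hasDerivAt).mul h1
  rw [show deriv (fun t => v t * Real.exp (k * t)) t = _ from h2.deriv]; ring

/-- Exponential decay of the derivative of the monotone shock profile. -/
theorem shock_derivative_exp_decay (s ε : ℝ) (hs : 0 < s) (hε : 0 < ε)
    (u : ℝ → ℝ) (hsmooth : ContDiff ℝ 1 u) (hmono : StrictAnti u)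
    (hlim_bot : Tendsto u atBot (𝓝 s)) (hlim_top : Tendsto u atTop (𝓝 (-s)))
    (hlow : ∀ x, (Real.sqrt 2 - 1) * (s - u x) * (u x + s) ≤ -ε * deriv u x)
    (hhigh : ∀ x, -ε * deriv u x ≤ (s - u x) * (u x + s))
    (hzero : u 0 = 0) :
    ∀ x, ((Real.sqrt 2 - 1) * s ^ 2 / ε) * Real.exp (-2 * s * |x| / ε) ≤ -deriv u x ∧
      -deriv u x ≤ (2 * s ^ 2 / ε) * Real.exp (-(Real.sqrt 2 - 1) * s * |x| / ε) := by
  have hd : Differentiable ℝ u := hsmooth.differentiable one_ne_zero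
  have hc : 0 < Real.sqrt 2 - 1 := by
    nlinarith [Real.sq_sqrt (by norm_num : (0:ℝ) ≤ 2), Real.sqrt_nonneg 2]
  have hub : ∀ x, u x ≤ s := by
    intro x
    refine ge_of_tendsto hlim_bot ?_
    filter_upwards [eventually_le_atBot x] with y hy
    exact hmono.antitone hy
  have hlb : ∀ x, -s ≤ u x := by
    intro x
    refine le_of_tendsto hlim_top ?_
    filter_upwards [eventually_ge_atTop x] with y hy
    exact hmono.antitone hy
  have hup : ∀ t, 0 ≤ t → u t ≤ 0 := by
    intro t ht
    have := hmono.antitone ht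
    rwa [hzero] at this
  have hun : ∀ t, t ≤ 0 → 0 ≤ u t := by
    intro t ht
    have := hmono.antitone ht
    rwa [hzero] at this
  have hdexp : ∀ k : ℝ, Differentiable ℝ (fun x : ℝ => Real.exp (k * x)) :=
    fun k => (differentiable_id.const_mul k).exp
  -- A : lower bound for s + u on the right
  have A : ∀ x, 0 ≤ x → s ≤ (s + u x) * Real.exp (2*s/ε * x) := by
    intro x hx
    have key : ∀ t, 0 < t → 0 ≤ deriv (fun t => (s + u t) * Real.exp (2*s/ε * t)) t := by
      intro t ht
      rw [SDE_deriv_mul_exp _ (hd.const_add s), deriv_const_add]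
      have h1 : 0 ≤ ε * deriv u t + 2*s*(s+u t) := by
        nlinarith [hhigh t, sq_nonneg (s + u t)]
      have h2 : 0 ≤ deriv u t + 2*s/ε*(s + u t) := by
        have hq := div_nonneg h1 hε.le
        have heq : (ε * deriv u t + 2*s*(s+u t))/ε = deriv u t + 2*s/ε*(s + u t) := by
          field_simp
        rwa [heq] at hq
      exact mul_nonneg h2 (Real.exp_pos _).le
    have := SDE_mono_Ici _ ((hd.const_add s).mul (hdexp _)) key hx
    simpa [hzero] using this
  -- B : upper bound for s + u on the right
  have B : ∀ x, 0 ≤ x → (s + u x) * Real.exp ((Real.sqrt 2 - 1)*s/ε * x) ≤ s := by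
    intro x hx
    have key : ∀ t, 0 < t →
        deriv (fun t => (s + u t) * Real.exp ((Real.sqrt 2 - 1)*s/ε * t)) t ≤ 0 := by
      intro t ht
      rw [SDE_deriv_mul_exp _ (hd.const_add s), deriv_const_add]
      have h1 : ε * deriv u t + (Real.sqrt 2 - 1)*s*(s+u t) ≤ 0 := by
        nlinarith [hlow t, mul_nonneg (mul_nonneg hc.le (neg_nonneg.2 (hup t ht.le)))
          (by linarith [hlb t] : (0:ℝ) ≤ u t + s)]
      have h2 : deriv u t + (Real.sqrt 2 - 1)*s/ε*(s + u t) ≤ 0 := by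
        have hq := div_nonpos_of_nonpos_of_nonneg h1 hε.le
        have heq : (ε * deriv u t + (Real.sqrt 2 - 1)*s*(s+u t))/ε
            = deriv u t + (Real.sqrt 2 - 1)*s/ε*(s + u t) := by
          field_simp
        rwa [heq] at hq
      exact mul_nonpos_of_nonpos_of_nonneg h2 (Real.exp_pos _).le
    have := SDE_anti_Ici _ ((hd.const_add s).mul (hdexp _)) key hx
    simpa [hzero] using this
  -- C : lower bound for s - u on the left
  have C : ∀ x, x ≤ 0 → s ≤ (s - u x) * Real.exp (-(2*s/ε) * x) := by
    intro x hx
    have key : ∀ t, t < 0 → deriv (fun t => (s - u t) * Real.exp (-(2*s/ε) * t)) t ≤ 0 := by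
      intro t ht
      rw [SDE_deriv_mul_exp _ (hd.const_sub s), deriv_const_sub]
      have h1 : -(ε * deriv u t) - 2*s*(s - u t) ≤ 0 := by
        nlinarith [hhigh t, sq_nonneg (s - u t)]
      have h2 : -deriv u t + -(2*s/ε)*(s - u t) ≤ 0 := by
        have hq := div_nonpos_of_nonpos_of_nonneg h1 hε.le
        have heq : (-(ε * deriv u t) - 2*s*(s - u t))/ε = -deriv u t + -(2*s/ε)*(s - u t) := by
          field_simp; ring
        rwa [heq] at hq
      exact mul_nonpos_of_nonpos_of_nonneg h2 (Real.exp_pos _).le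
    have := SDE_anti_Iic _ ((hd.const_sub s).mul (hdexp _)) key hx
    simpa [hzero] using this
  -- D : upper bound for s - u on the left
  have D : ∀ x, x ≤ 0 → (s - u x) * Real.exp (-((Real.sqrt 2 - 1)*s/ε) * x) ≤ s := by
    intro x hx
    have key : ∀ t, t < 0 →
        0 ≤ deriv (fun t => (s - u t) * Real.exp (-((Real.sqrt 2 - 1)*s/ε) * t)) t := by
      intro t ht
      rw [SDE_deriv_mul_exp _ (hd.const_sub s), deriv_const_sub]
      have h1 : 0 ≤ -(ε * deriv u t) - (Real.sqrt 2 - 1)*s*(s - u t) := by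
        nlinarith [hlow t, mul_nonneg (mul_nonneg hc.le
          (by linarith [hub t] : (0:ℝ) ≤ s - u t)) (hun t ht.le)]
      have h2 : 0 ≤ -deriv u t + -((Real.sqrt 2 - 1)*s/ε)*(s - u t) := by
        have hq := div_nonneg h1 hε.le
        have heq : (-(ε * deriv u t) - (Real.sqrt 2 - 1)*s*(s - u t))/ε
            = -deriv u t + -((Real.sqrt 2 - 1)*s/ε)*(s - u t) := by
          field_simp; ring
        rwa [heq] at hq
      exact mul_nonneg h2 (Real.exp_pos _).le
    have := SDE_mono_Iic _ ((hd.const_sub s).mul (hdexp _)) key hx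
    simpa [hzero] using this
  -- assemble
  intro x
  rcases le_or_gt 0 x with hx | hx
  · rw [abs_of_nonneg hx]
    have hA : s * Real.exp (-2 * s * x / ε) ≤ s + u x := by
      rw [show (-2 * s * x / ε) = -(2*s/ε * x) by ring, Real.exp_neg]
      exact (mul_inv_le_iff₀ (Real.exp_pos _)).2 (A x hx)
    have hB : s + u x ≤ s * Real.exp (-(Real.sqrt 2 - 1) * s * x / ε) := by
      rw [show (-(Real.sqrt 2 - 1) * s * x / ε) = -((Real.sqrt 2 - 1)*s/ε * x) by ring,
        Real.exp_neg]
      exact (le_mul_inv_iff₀ (Real.exp_pos _)).2 (B x hx)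
    constructor
    · rw [div_mul_eq_mul_div, div_le_iff₀ hε]
      linarith [hlow x, mul_nonneg (mul_nonneg hc.le (neg_nonneg.2 (hup x hx)))
        (by linarith [hlb x] : (0:ℝ) ≤ u x + s),
        mul_le_mul_of_nonneg_left hA (mul_nonneg hc.le hs.le)]
    · rw [div_mul_eq_mul_div, le_div_iff₀ hε]
      nlinarith [hhigh x, sq_nonneg (s + u x),
        mul_le_mul_of_nonneg_left hB (by linarith : (0:ℝ) ≤ 2*s)]
  · rw [abs_of_nonpos hx.le]
    have hC : s * Real.exp (-2 * s * -x / ε) ≤ s - u x := by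
      rw [show (-2 * s * -x / ε) = -(-(2*s/ε) * x) by ring, Real.exp_neg]
      exact (mul_inv_le_iff₀ (Real.exp_pos _)).2 (C x hx.le)
    have hD : s - u x ≤ s * Real.exp (-(Real.sqrt 2 - 1) * s * -x / ε) := by
      rw [show (-(Real.sqrt 2 - 1) * s * -x / ε) = -(-((Real.sqrt 2 - 1)*s/ε) * x) by ring,
        Real.exp_neg]
      exact (le_mul_inv_iff₀ (Real.exp_pos _)).2 (D x hx.le)
    constructor
    · rw [div_mul_eq_mul_div, div_le_iff₀ hε]
      linarith [hlow x, mul_nonneg (mul_nonneg hc.le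
        (by linarith [hub x] : (0:ℝ) ≤ s - u x)) (hun x hx.le),
        mul_le_mul_of_nonneg_left hC (mul_nonneg hc.le hs.le)]
    · rw [div_mul_eq_mul_div, le_div_iff₀ hε]
      nlinarith [hhigh x, sq_nonneg (s - u x),
        mul_le_mul_of_nonneg_left hD (by linarith : (0:ℝ) ≤ 2*s)]
end
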